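/- Let f ∈ H²(T) with ‖f‖₂ = 1. Then there exist unit-norm functions f₁, f₂ ∈ H²(T) such that |f|² = (|f₁|² + |f₂|²)/2 a.e. on T and |f₁| ≠ |f₂| on a set of positive measure. -/

import Mathlib

open MeasureTheory Complex Filter Set Metric
open scoped Real ENNReal ComplexConjugate

noncomputable section

instance : Fact (0 < 2 * Real.pi) := ⟨by positivity⟩

/-- The unit circle, realized as `ℝ / 2πℤ`. -/
abbrev 𝕋 := AddCircle (2 * Real.pi)

/-- The normalized Lebesgue (Haar) measure on the circle. -/
abbrev m : Measure 𝕋 := AddCircle.haarAddCircle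

/-- The identity coordinate `z = e^{iθ}` on the circle. -/
def bz : 𝕋 → ℂ := fun x => fourier 1 x

/-- `F` belongs to the Hardy class `H^p` of the open unit disk:
holomorphic with uniformly bounded `p`-means on circles (bounded, if `p = ∞`). -/
def HpDisk (p : ℝ≥0∞) (F : ℂ → ℂ) : Prop :=
  DifferentiableOn ℂ F (ball (0:ℂ) 1) ∧
    if p = ∞ then ∃ C : ℝ, ∀ w ∈ ball (0:ℂ) 1, ‖F w‖ ≤ C
    else ∃ C : ℝ, ∀ r ∈ Ico (0:ℝ) 1, (∫ x : 𝕋, ‖F ((r : ℂ) * bz x)‖ ^ p.toReal ∂m) ≤ C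

/-- `f : 𝕋 → ℂ` is the a.e. radial boundary function of `F : ℂ → ℂ`. -/
def IsBoundary (F : ℂ → ℂ) (f : 𝕋 → ℂ) : Prop :=
  ∀ᵐ x ∂m, Tendsto (fun r : ℝ => F ((r : ℂ) * bz x)) (nhdsWithin 1 (Iio 1)) (nhds (f x))

/-- `f` belongs to the Hardy space `H^p(𝕋)`: it is the boundary function of some
disk function of class `H^p`. -/
def MemHp (p : ℝ≥0∞) (f : 𝕋 → ℂ) : Prop :=
  ∃ F : ℂ → ℂ, HpDisk p F ∧ IsBoundary F f

/-- `f` belongs to the kernel `K_p(φ)` of the Toeplitz operator `T_φ`: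
`f ∈ H^p` and the companion function `conj (z φ f)` is in `H^p`. -/
def MemKp (p : ℝ≥0∞) (φ f : 𝕋 → ℂ) : Prop :=
  MemHp p f ∧ MemHp p (fun x => conj (bz x * φ x * f x))

/-- The set `V_φ = {|f|² : f ∈ K₂(φ), 0 < ‖f‖₂ ≤ 1}` (of a.e.-defined functions). -/
def Vphi (φ : 𝕋 → ℂ) : Set (𝕋 → ℝ) :=
  {g | ∃ f : 𝕋 → ℂ, MemKp 2 φ f ∧ 0 < eLpNorm f 2 m ∧ eLpNorm f 2 m ≤ 1 ∧
        ∀ᵐ x ∂m, g x = ‖f x‖ ^ 2}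

/-- `g` is an extreme point of `V_φ` (in the a.e. sense). -/
def IsExtremeVphi (φ : 𝕋 → ℂ) (g : 𝕋 → ℝ) : Prop :=
  g ∈ Vphi φ ∧ ∀ g₁ ∈ Vphi φ, ∀ g₂ ∈ Vphi φ,
    (∀ᵐ x ∂m, g x = (g₁ x + g₂ x) / 2) → (g₁ =ᵐ[m] g ∧ g₂ =ᵐ[m] g)

/-- The outer function on the disk with boundary modulus `w`, given by the
Herglotz-type integral formula. -/
def OuterOf (w : 𝕋 → ℝ) : ℂ → ℂ :=
  fun ζ => Complex.exp (∫ x : 𝕋, ((bz x + ζ) / (bz x - ζ)) * (Real.log (w x) : ℂ) ∂m)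

/-- `F : ℂ → ℂ` is an outer function: a unimodular constant times `OuterOf w`
for some weight `w ≥ 0` with `log w ∈ L¹`. -/
def IsOuter (F : ℂ → ℂ) : Prop :=
  ∃ (c : ℂ) (w : 𝕋 → ℝ), ‖c‖ = 1 ∧ (∀ᵐ x ∂m, 0 ≤ w x) ∧
    Integrable (fun x => Real.log (w x)) m ∧
    ∀ ζ ∈ ball (0:ℂ) 1, F ζ = c * OuterOf w ζ

/-- A boundary function `f ∈ H^p(𝕋)` is outer. -/
def IsOuterBnd (p : ℝ≥0∞) (f : 𝕋 → ℂ) : Prop :=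
  ∃ F : ℂ → ℂ, HpDisk p F ∧ IsOuter F ∧ IsBoundary F f

/-- `F` is an inner function: holomorphic and bounded by `1` on the disk,
with unimodular boundary values a.e. -/
def IsInner (F : ℂ → ℂ) : Prop :=
  DifferentiableOn ℂ F (ball (0:ℂ) 1) ∧ (∀ w ∈ ball (0:ℂ) 1, ‖F w‖ ≤ 1) ∧
    ∃ f : 𝕋 → ℂ, IsBoundary F f ∧ ∀ᵐ x ∂m, ‖f x‖ = 1

/-- The inner function `J` divides the inner function `I`. -/
def InnerDivides (J I : ℂ → ℂ) : Prop :=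
  ∃ K : ℂ → ℂ, IsInner K ∧ ∀ ζ ∈ ball (0:ℂ) 1, I ζ = J ζ * K ζ

/-- `F` belongs to the Smirnov class `N⁺`: a quotient of an `H^∞` function by an
outer `H^∞` function. -/
def MemNplus (F : ℂ → ℂ) : Prop :=
  ∃ G H : ℂ → ℂ, HpDisk ∞ G ∧ HpDisk ∞ H ∧ IsOuter H ∧
    ∀ ζ ∈ ball (0:ℂ) 1, F ζ * H ζ = G ζ

/-!
Let `c = ∫ |f|² z dm` be the first moment of `|f|²` and pick a unimodular `a` with
`Re (a c) = 0`. Take `f₁ = f (1 + a z)/√2` and `f₂ = f (1 - a z)/√2`: multiplying by a polynomial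
in `z` keeps us in `H²`, and `|f₁|² = |f|² (1 + Re (a z))`, `|f₂|² = |f|² (1 - Re (a z))`. So the
average of `|f₁|²` and `|f₂|²` is `|f|²`, and both have norm `1` because
`∫ |f|² Re (a z) = Re (a c) = 0`. Finally `|f₁| = |f₂|` forces `f = 0` or `Re (a z) = 0`, and the
latter happens at only two points of the circle.
-/

open Topology

lemma norm_bz (x : 𝕋) : ‖bz x‖ = 1 := by
  simp [bz, fourier_apply, Circle.norm_coe]

@[fun_prop]
lemma continuous_bz : Continuous bz := (fourier 1).continuous

lemma injective_bz : Function.Injective bz := fun x y h => by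
  simp only [bz, fourier_one] at h
  exact AddCircle.injective_toCircle (by positivity) (Circle.coe_injective h)

instance : NullSingletonClass m := by
  refine ⟨fun x => ?_⟩
  have hvol : (volume : Measure 𝕋) {x} = 0 := by
    rw [← closedBall_zero, AddCircle.volume_closedBall]
    simp [Real.pi_pos.le]
  rw [AddCircle.volume_eq_smul_haarAddCircle, Measure.smul_apply, smul_eq_mul] at hvol
  exact (mul_eq_zero.1 hvol).resolve_left (by simp [Real.pi_pos])

lemma Complex.eq_I_mul_norm_or_eq_neg_of_re_eq_zero {w : ℂ} (hw : w.re = 0) :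
    w = I * ‖w‖ ∨ w = -(I * ‖w‖) := by
  have hw_eq : w = I * w.im := Complex.ext (by simp [hw]) (by simp)
  have hnorm : ‖w‖ = |w.im| := by rw [hw_eq]; simp
  rcases abs_choice w.im with h | h
  · left; rw [hnorm, h, ← hw_eq]
  · right; rw [hnorm, h]; nth_rewrite 1 [hw_eq]; push_cast; ring

lemma finite_setOf_re_mul_bz_eq_zero {a : ℂ} (ha : a ≠ 0) :
    {x : 𝕋 | (a * bz x).re = 0}.Finite := by
  have hsub : {x : 𝕋 | (a * bz x).re = 0} ⊆
      (fun x => a * bz x) ⁻¹' {I * ‖a‖, -(I * ‖a‖)} := fun x hx => by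
    have h := Complex.eq_I_mul_norm_or_eq_neg_of_re_eq_zero (w := a * bz x) hx
    rwa [norm_mul, norm_bz, mul_one] at h
  exact (((Set.finite_singleton _).insert _).preimage
    ((mul_right_injective₀ ha).comp injective_bz).injOn).subset hsub

lemma ofReal_mul_bz_mem_ball {r : ℝ} (hr : |r| < 1) (x : 𝕋) :
    (r : ℂ) * bz x ∈ ball (0 : ℂ) 1 := by
  rwa [mem_ball_zero_iff, norm_mul, norm_bz, mul_one, Complex.norm_real, Real.norm_eq_abs]

lemma continuous_comp_ofReal_mul_bz {F : ℂ → ℂ} (hF : ContinuousOn F (ball 0 1)) {r : ℝ}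
    (hr : |r| < 1) : Continuous fun x : 𝕋 => F (r * bz x) :=
  hF.comp_continuous (continuous_const.mul continuous_bz) (ofReal_mul_bz_mem_ball hr)

lemma IsBoundary.aestronglyMeasurable {F : ℂ → ℂ} {f : 𝕋 → ℂ}
    (hF : ContinuousOn F (ball 0 1)) (hFf : IsBoundary F f) : AEStronglyMeasurable f m := by
  obtain ⟨r, -, hr, hr_lim⟩ := exists_seq_strictMono_tendsto' (zero_lt_one' ℝ)
  have hr_abs : ∀ n, |r n| < 1 := fun n => abs_lt.2 ⟨by linarith [(hr n).1], (hr n).2⟩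
  refine aestronglyMeasurable_of_tendsto_ae atTop
    (fun n => (continuous_comp_ofReal_mul_bz hF (hr_abs n)).aestronglyMeasurable) ?_
  filter_upwards [hFf] with x hx
  exact hx.comp (tendsto_nhdsWithin_iff.2 ⟨hr_lim, .of_forall fun n => (hr n).2⟩)

lemma MemHp.aestronglyMeasurable {p : ℝ≥0∞} {f : 𝕋 → ℂ} (hf : MemHp p f) :
    AEStronglyMeasurable f m :=
  let ⟨_, hF, hFf⟩ := hf
  hFf.aestronglyMeasurable hF.1.continuousOn

lemma IsBoundary.mul_comp_bz {F G : ℂ → ℂ} {f : 𝕋 → ℂ} (hFf : IsBoundary F f)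
    (hG : Continuous G) : IsBoundary (fun ζ => F ζ * G ζ) (fun x => f x * G (bz x)) := by
  filter_upwards [hFf] with x hx
  have hG_lim : Tendsto (fun r : ℝ => G (r * bz x)) (𝓝 1) (𝓝 (G (bz x))) :=
    (by fun_prop : Continuous fun r : ℝ => G (r * bz x)).tendsto' 1 _ (by simp)
  exact hx.mul (hG_lim.mono_left nhdsWithin_le_nhds)

lemma HpDisk.mul {p : ℝ≥0∞} {F G : ℂ → ℂ} (hF : HpDisk p F) (hG : Differentiable ℂ G) :
    HpDisk p fun ζ => F ζ * G ζ := by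
  obtain ⟨hF_diff, hF_bound⟩ := hF
  obtain ⟨K, hK⟩ := (isCompact_closedBall (0 : ℂ) 1).exists_bound_of_continuousOn
    hG.continuous.continuousOn
  have hK_ball : ∀ w ∈ ball (0 : ℂ) 1, ‖G w‖ ≤ K := fun w hw => hK w (ball_subset_closedBall hw)
  refine ⟨hF_diff.mul hG.differentiableOn, ?_⟩
  split_ifs with hp
  · rw [if_pos hp] at hF_bound
    obtain ⟨C, hC⟩ := hF_bound
    exact ⟨C * K, fun w hw => norm_mul_le_of_le (hC w hw) (hK_ball w hw)⟩
  · rw [if_neg hp] at hF_bound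
    obtain ⟨C, hC⟩ := hF_bound
    have hK0 : 0 ≤ K := (norm_nonneg _).trans (hK 0 (by simp))
    set t := p.toReal
    refine ⟨K ^ t * C, fun r hr => ?_⟩
    have hr_abs : |r| < 1 := abs_lt.2 ⟨by linarith [hr.1], hr.2⟩
    have hF_int : Integrable (fun x : 𝕋 => ‖F (r * bz x)‖ ^ t) m :=
      ((continuous_comp_ofReal_mul_bz hF_diff.continuousOn hr_abs).norm.rpow_const
        fun _ => Or.inr ENNReal.toReal_nonneg).integrable_of_hasCompactSupport
        (HasCompactSupport.of_compactSpace _)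
    calc ∫ x : 𝕋, ‖F (r * bz x) * G (r * bz x)‖ ^ t ∂m
        ≤ ∫ x : 𝕋, K ^ t * ‖F (r * bz x)‖ ^ t ∂m := by
          refine integral_mono_of_nonneg (.of_forall fun x => by positivity)
            (hF_int.const_mul _) (.of_forall fun x => ?_)
          dsimp only
          rw [norm_mul, Real.mul_rpow (norm_nonneg _) (norm_nonneg _), mul_comm]
          gcongr
          exact hK_ball _ (ofReal_mul_bz_mem_ball hr_abs x)
      _ = K ^ t * ∫ x : 𝕋, ‖F (r * bz x)‖ ^ t ∂m := integral_const_mul _ _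
      _ ≤ K ^ t * C := by gcongr; exact hC r hr

lemma MemHp.mul_comp_bz {p : ℝ≥0∞} {f : 𝕋 → ℂ} {G : ℂ → ℂ} (hf : MemHp p f)
    (hG : Differentiable ℂ G) : MemHp p fun x => f x * G (bz x) :=
  let ⟨_, hF, hFf⟩ := hf
  ⟨_, hF.mul hG, hFf.mul_comp_bz hG.continuous⟩

lemma MeasureTheory.MemLp.eLpNorm_two_eq_one_iff {α E : Type*} [MeasurableSpace α] {μ : Measure α}
    [NormedAddCommGroup E] {f : α → E} (hf : MemLp f 2 μ) :
    eLpNorm f 2 μ = 1 ↔ ∫ x, ‖f x‖ ^ 2 ∂μ = 1 := by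
  have hI : 0 ≤ ∫ x, ‖f x‖ ^ 2 ∂μ := integral_nonneg fun x => by positivity
  rw [hf.eLpNorm_eq_integral_rpow_norm two_ne_zero ENNReal.ofNat_ne_top, ENNReal.ofReal_eq_one]
  simp only [ENNReal.toReal_ofNat, Real.rpow_two]
  rw [Real.rpow_inv_eq hI zero_le_one two_ne_zero, Real.one_rpow]

lemma Complex.norm_one_add_sq {w : ℂ} (hw : ‖w‖ = 1) : ‖1 + w‖ ^ 2 = 2 * (1 + w.re) := by
  have hw' : w.re * w.re + w.im * w.im = 1 := by
    rw [← Complex.normSq_apply, ← Complex.sq_norm, hw, one_pow]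
  rw [Complex.sq_norm, Complex.normSq_apply]
  simp only [add_re, one_re, add_im, one_im, zero_add]
  linear_combination hw'

lemma Complex.exists_norm_eq_one_re_mul_eq_zero (c : ℂ) : ∃ a : ℂ, ‖a‖ = 1 ∧ (a * c).re = 0 := by
  rcases eq_or_ne c 0 with rfl | hc
  · exact ⟨1, norm_one, by simp⟩
  · refine ⟨I * ‖c‖ / c, ?_, ?_⟩
    · simp [norm_ne_zero_iff.2 hc]
    · rw [div_mul_cancel₀ _ hc]; simp

def normSqMoment (f : 𝕋 → ℂ) : ℂ := ∫ x, ((‖f x‖ ^ 2 : ℝ) : ℂ) * bz x ∂m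

def tilt (a : ℂ) (f : 𝕋 → ℂ) : 𝕋 → ℂ := fun x => f x * ((1 + a * bz x) / Real.sqrt 2)

section tilt

variable {a : ℂ} {f : 𝕋 → ℂ}

lemma norm_tilt_sq (ha : ‖a‖ = 1) (x : 𝕋) :
    ‖tilt a f x‖ ^ 2 = ‖f x‖ ^ 2 * (1 + (a * bz x).re) := by
  have hw : ‖a * bz x‖ = 1 := by rw [norm_mul, ha, norm_bz, one_mul]
  rw [tilt, norm_mul, mul_pow, norm_div, div_pow, Complex.norm_one_add_sq hw, Complex.norm_real,
    Real.norm_eq_abs, sq_abs, Real.sq_sqrt zero_le_two]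
  ring

lemma MemHp.tilt {p : ℝ≥0∞} (hf : MemHp p f) (a : ℂ) : MemHp p (tilt a f) :=
  hf.mul_comp_bz (G := fun ζ => (1 + a * ζ) / Real.sqrt 2) (by fun_prop)

lemma MeasureTheory.MemLp.tilt {p : ℝ≥0∞} (hf : MemLp f p m) (ha : ‖a‖ = 1) :
    MemLp (tilt a f) p m := by
  refine hf.of_le_mul (c := Real.sqrt 2)
    (hf.1.mul (by fun_prop : Continuous fun x => (1 + a * bz x) / Real.sqrt 2).aestronglyMeasurable)
    (.of_forall fun x => ?_)
  rw [← pow_le_pow_iff_left₀ (norm_nonneg _) (by positivity) two_ne_zero, mul_pow,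
    Real.sq_sqrt zero_le_two, norm_tilt_sq ha]
  have hre : (a * bz x).re ≤ 1 := by
    simpa [norm_mul, ha, norm_bz] using re_le_norm (a * bz x)
  nlinarith [sq_nonneg ‖f x‖]

lemma integral_norm_tilt_sq (ha : ‖a‖ = 1) (hf : Integrable (fun x => ‖f x‖ ^ 2) m) :
    ∫ x, ‖tilt a f x‖ ^ 2 ∂m =
      ∫ x, ‖f x‖ ^ 2 ∂m + (a * normSqMoment f).re := by
  have hmoment_int : Integrable (fun x => a * (((‖f x‖ ^ 2 : ℝ) : ℂ) * bz x)) m :=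
    (hf.ofReal.mul_bdd continuous_bz.aestronglyMeasurable
      (.of_forall fun x => (norm_bz x).le)).const_mul a
  have hre_eq : ∀ x, ‖f x‖ ^ 2 * (a * bz x).re = (a * (((‖f x‖ ^ 2 : ℝ) : ℂ) * bz x)).re :=
    fun x => by rw [mul_left_comm, Complex.re_ofReal_mul]
  simp_rw [norm_tilt_sq ha, mul_add, mul_one, hre_eq]
  have hre_int : Integrable (fun x => (a * (((‖f x‖ ^ 2 : ℝ) : ℂ) * bz x)).re) m :=
    hmoment_int.re
  have hre_integral := integral_re hmoment_int
  simp only [RCLike.re_to_complex] at hre_integral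
  rw [integral_add hf hre_int, hre_integral, normSqMoment, integral_const_mul]

lemma eLpNorm_tilt_eq_one (hf : MemLp f 2 m) (hnorm : eLpNorm f 2 m = 1) (ha : ‖a‖ = 1)
    (hmoment : (a * normSqMoment f).re = 0) : eLpNorm (tilt a f) 2 m = 1 := by
  rw [(hf.tilt ha).eLpNorm_two_eq_one_iff,
    integral_norm_tilt_sq ha (hf.integrable_norm_pow two_ne_zero), hmoment, add_zero,
    ← hf.eLpNorm_two_eq_one_iff, hnorm]

lemma measure_pos_setOf_norm_tilt_ne (ha : ‖a‖ = 1) (hf : ¬f =ᵐ[m] 0) :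
    0 < m {x | ‖tilt a f x‖ ≠ ‖tilt (-a) f x‖} := by
  have ha0 : a ≠ 0 := ne_zero_of_norm_ne_zero (by rw [ha]; exact one_ne_zero)
  have hsub : {x | f x ≠ 0} \ {x | (a * bz x).re = 0} ⊆
      {x | ‖tilt a f x‖ ≠ ‖tilt (-a) f x‖} := by
    rintro x ⟨hfx, hre⟩ heq
    have hsq := congrArg (· ^ 2) heq
    simp only [norm_tilt_sq ha, norm_tilt_sq ((norm_neg a).trans ha), neg_mul, neg_re] at hsq
    have hprod : ‖f x‖ ^ 2 * (2 * (a * bz x).re) = 0 := by linear_combination hsq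
    have := (mul_eq_zero.1 hprod).resolve_left (pow_ne_zero 2 (norm_ne_zero_iff.2 hfx))
    exact hre (show (a * bz x).re = 0 by linarith)
  have hsupp : 0 < m {x | f x ≠ 0} := by
    simpa [pos_iff_ne_zero, Filter.EventuallyEq, ae_iff] using hf
  calc 0 < m {x | f x ≠ 0} := hsupp
    _ = m ({x | f x ≠ 0} \ {x | (a * bz x).re = 0}) :=
      (measure_sdiff_null ((finite_setOf_re_mul_bz_eq_zero ha0).measure_zero m)).symm
    _ ≤ _ := measure_mono hsub

end tilt

/-- Every unit-norm `f ∈ H²` admits a nontrivial decomposition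
`|f|² = (|f₁|² + |f₂|²)/2` with unit-norm `f₁, f₂ ∈ H²` and `|f₁| ≠ |f₂|` on a set
of positive measure. -/
theorem stmt1 (f : 𝕋 → ℂ) (hf : MemHp 2 f) (hnorm : eLpNorm f 2 m = 1) :
    ∃ f₁ f₂ : 𝕋 → ℂ, MemHp 2 f₁ ∧ MemHp 2 f₂ ∧
      eLpNorm f₁ 2 m = 1 ∧ eLpNorm f₂ 2 m = 1 ∧
      (∀ᵐ x ∂m, ‖f x‖ ^ 2 = (‖f₁ x‖ ^ 2 + ‖f₂ x‖ ^ 2) / 2) ∧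
      0 < m {x | ‖f₁ x‖ ≠ ‖f₂ x‖} := by
  have hf2 : MemLp f 2 m := ⟨hf.aestronglyMeasurable, by simp [hnorm]⟩
  obtain ⟨a, ha, hmoment⟩ := Complex.exists_norm_eq_one_re_mul_eq_zero (normSqMoment f)
  have ha_neg : ‖-a‖ = 1 := (norm_neg a).trans ha
  refine ⟨tilt a f, tilt (-a) f, hf.tilt a, hf.tilt (-a), eLpNorm_tilt_eq_one hf2 hnorm ha hmoment,
    eLpNorm_tilt_eq_one hf2 hnorm ha_neg (by rw [neg_mul, neg_re, hmoment, neg_zero]),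
    .of_forall fun x => ?_, measure_pos_setOf_norm_tilt_ne ha fun hf0 => ?_⟩
  · rw [norm_tilt_sq ha, norm_tilt_sq ha_neg, neg_mul, neg_re]
    ring
  · rw [eLpNorm_congr_ae hf0, eLpNorm_zero] at hnorm
    exact zero_ne_one hnorm
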